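/- arXiv:1604.05494 — 2 statements merged into one kernel-verified Lean document; each statement's English description precedes it below -/
import Mathlib

section
/- Fix β ∈ [0,1) and n ≥ 2. If a probability measure μ on [0,2π] gives coefficients aₙ = (2(1−β)/n)∫₀^{2π} e^{i(n−1)θ}dμ(θ) and a_{2n−1} = (2(1−β)/(2n−1))∫₀^{2π} e^{i(2n−2)θ}dμ(θ), then for 0 < λ ≤ 4/(3(1−β)): |λ aₙ² − a_{2n−1}| ≤ 2(1−β)/(2n−1). -/
open MeasureTheory

/-! With `g θ = exp (i (n - 1) θ)`, the coefficients are `aₙ = cₙ m` and `a₂ₙ₋₁ = c₂ₙ₋₁ S` where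
`m = ∫ g` and `S = ∫ g²`. Since `S - m² = ∫ (g - m)²`, we get `|S - m²| ≤ ∫ |g - m|² = 1 - |m|²`,
hence `|t m² - S| ≤ |t - 1| |m|² + 1 - |m|² ≤ 1` for `0 ≤ t ≤ 2`. The bound on `λ` is what makes
`t = λ cₙ² / c₂ₙ₋₁ ≤ 2`, through `(3n - 2)(n - 2) ≥ 0`. -/

section

variable {α : Type*} [MeasurableSpace α] {μ : Measure α} [IsProbabilityMeasure μ]

theorem integral_norm_sub_integral_sq {E : Type*} [NormedAddCommGroup E] [InnerProductSpace ℝ E]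
    [CompleteSpace E] {g : α → E} (hg : MemLp g 2 μ) :
    ∫ x, ‖g x - ∫ y, g y ∂μ‖ ^ 2 ∂μ = ∫ x, ‖g x‖ ^ 2 ∂μ - ‖∫ x, g x ∂μ‖ ^ 2 := by
  set m := ∫ x, g x ∂μ
  have hg₁ : Integrable g μ := hg.integrable one_le_two
  have hg₂ : Integrable (fun x => ‖g x‖ ^ 2) μ := (memLp_two_iff_integrable_sq_norm hg.1).1 hg
  have hinner : Integrable (fun x => 2 * inner ℝ (g x) m) μ := (hg₁.inner_const m).const_mul 2
  have hmean : ∫ x, inner ℝ (g x) m ∂μ = ‖m‖ ^ 2 := by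
    simp_rw [real_inner_comm m]
    rw [integral_inner hg₁, real_inner_self_eq_norm_sq]
  simp_rw [norm_sub_sq_real]
  rw [integral_add (f := fun x => ‖g x‖ ^ 2 - 2 * inner ℝ (g x) m) (hg₂.sub hinner)
      (integrable_const _), integral_sub hg₂ hinner, integral_const_mul, hmean]
  simp only [integral_const, probReal_univ, one_smul]
  ring

theorem norm_integral_sq_sub_sq_integral_le {g : α → ℂ} (hg : MemLp g 2 μ) :
    ‖∫ x, g x ^ 2 ∂μ - (∫ x, g x ∂μ) ^ 2‖ ≤ ∫ x, ‖g x‖ ^ 2 ∂μ - ‖∫ x, g x ∂μ‖ ^ 2 := by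
  set m := ∫ x, g x ∂μ
  have hg₁ : Integrable g μ := hg.integrable one_le_two
  have hg₂ : Integrable (fun x => g x ^ 2) μ :=
    (hg.integrable_mul hg).congr (.of_forall fun x => (sq (g x)).symm)
  have hcentre : ∫ x, (g x - m) ^ 2 ∂μ = ∫ x, g x ^ 2 ∂μ - m ^ 2 := by
    have hexpand : ∀ x, (g x - m) ^ 2 = g x ^ 2 - 2 * m * g x + m ^ 2 := fun x => by ring
    simp_rw [hexpand]
    rw [integral_add (f := fun x => g x ^ 2 - 2 * m * g x) (hg₂.sub (hg₁.const_mul _))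
      (integrable_const _), integral_sub hg₂ (hg₁.const_mul _), integral_const_mul]
    simp only [integral_const, probReal_univ, one_smul]
    ring
  rw [← hcentre, ← integral_norm_sub_integral_sq hg]
  calc ‖∫ x, (g x - m) ^ 2 ∂μ‖ ≤ ∫ x, ‖(g x - m) ^ 2‖ ∂μ := norm_integral_le_integral_norm _
    _ = ∫ x, ‖g x - m‖ ^ 2 ∂μ := by simp_rw [norm_pow]

theorem norm_mul_sq_integral_sub_integral_sq_le {g : α → ℂ} (hg : MemLp g 2 μ) {t : ℝ}
    (ht₀ : 0 ≤ t) (ht₂ : t ≤ 2) :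
    ‖(t : ℂ) * (∫ x, g x ∂μ) ^ 2 - ∫ x, g x ^ 2 ∂μ‖ ≤ ∫ x, ‖g x‖ ^ 2 ∂μ := by
  set m := ∫ x, g x ∂μ
  set S := ∫ x, g x ^ 2 ∂μ
  have ht : ‖(t : ℂ) - 1‖ ≤ 1 := by
    rw [← Complex.ofReal_one, ← Complex.ofReal_sub, Complex.norm_real, Real.norm_eq_abs, abs_le]
    constructor <;> linarith
  calc ‖(t : ℂ) * m ^ 2 - S‖ = ‖((t : ℂ) - 1) * m ^ 2 - (S - m ^ 2)‖ := by congr 1; ring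
    _ ≤ ‖(t : ℂ) - 1‖ * ‖m‖ ^ 2 + ‖S - m ^ 2‖ := by
      grw [norm_sub_le, norm_mul, norm_pow]
    _ ≤ 1 * ‖m‖ ^ 2 + (∫ x, ‖g x‖ ^ 2 ∂μ - ‖m‖ ^ 2) := by
      gcongr
      exact norm_integral_sq_sub_sq_integral_le hg
    _ = ∫ x, ‖g x‖ ^ 2 ∂μ := by ring

end

theorem mul_div_sq_le_two_mul_div_two_mul_sub_one {b lam n : ℝ} (hb : 0 < b) (hn : 2 ≤ n)
    (hlam : lam ≤ 4 / (3 * b)) :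
    lam * (2 * b / n) ^ 2 ≤ 2 * (2 * b / (2 * n - 1)) := by
  rw [le_div_iff₀ (by positivity)] at hlam
  have hkey : lam * b * (2 * n - 1) ≤ n ^ 2 := by
    nlinarith [mul_nonneg (by linarith : 0 ≤ 3 * n - 2) (by linarith : 0 ≤ n - 2)]
  have hn₀ : 0 < n := by linarith
  have hn₁ : 0 < 2 * n - 1 := by linarith
  calc lam * (2 * b / n) ^ 2 = 4 * b * (lam * b * (2 * n - 1)) / (n ^ 2 * (2 * n - 1)) := by
        field_simp
        ring
    _ ≤ 4 * b * n ^ 2 / (n ^ 2 * (2 * n - 1)) := by gcongr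
    _ = 2 * (2 * b / (2 * n - 1)) := by field_simp; ring

theorem stmt_11_general (β : ℝ) (hβ1 : β < 1) (n : ℕ) (hn : 2 ≤ n)
    (μ : Measure (Set.Icc (0 : ℝ) (2 * Real.pi))) [IsProbabilityMeasure μ]
    (a : ℕ → ℂ)
    (han : a n = ((2 * (1 - β) / n : ℝ) : ℂ) *
      ∫ θ, Complex.exp (Complex.I * ((n : ℂ) - 1) * (θ : ℝ)) ∂μ)
    (han2 : a (2 * n - 1) = ((2 * (1 - β) / (2 * (n : ℝ) - 1) : ℝ) : ℂ) *
      ∫ θ, Complex.exp (Complex.I * (2 * (n : ℂ) - 2) * (θ : ℝ)) ∂μ)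
    (lam : ℝ) (hlam0 : 0 < lam) (hlam : lam ≤ 4 / (3 * (1 - β))) :
    ‖(lam : ℂ) * (a n) ^ 2 - a (2 * n - 1)‖ ≤
      2 * (1 - β) / (2 * (n : ℝ) - 1) := by
  set g : Set.Icc (0 : ℝ) (2 * Real.pi) → ℂ :=
    fun θ => Complex.exp (Complex.I * ((n : ℂ) - 1) * (θ : ℝ))
  have hg_norm (θ) : ‖g θ‖ = 1 := by
    simpa [g, mul_assoc] using Complex.norm_exp_I_mul_ofReal (((n : ℝ) - 1) * θ)
  have hg_sq (θ : Set.Icc (0 : ℝ) (2 * Real.pi)) :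
      Complex.exp (Complex.I * (2 * (n : ℂ) - 2) * (θ : ℝ)) = g θ ^ 2 := by
    rw [← Complex.exp_nat_mul]
    push_cast
    ring_nf
  have hg : MemLp g 2 μ :=
    .of_bound (by fun_prop : Continuous g).aestronglyMeasurable 1 (.of_forall (hg_norm · |>.le))
  have hn' : (2 : ℝ) ≤ n := by exact_mod_cast hn
  set c₁ := 2 * (1 - β) / n
  set c₂ := 2 * (1 - β) / (2 * (n : ℝ) - 1)
  have hc₂ : 0 < c₂ := div_pos (by linarith) (by linarith)
  have ht₂ : lam * c₁ ^ 2 / c₂ ≤ 2 :=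
    (div_le_iff₀ hc₂).2 (mul_div_sq_le_two_mul_div_two_mul_sub_one (by linarith) hn' hlam)
  have hbound := norm_mul_sq_integral_sub_integral_sq_le hg (by positivity) ht₂
  simp only [hg_norm, one_pow, integral_const, probReal_univ, one_smul] at hbound
  have hfactor : (lam : ℂ) * a n ^ 2 - a (2 * n - 1) =
      c₂ * (((lam * c₁ ^ 2 / c₂ : ℝ) : ℂ) * (∫ θ, g θ ∂μ) ^ 2 - ∫ θ, g θ ^ 2 ∂μ) := by
    simp_rw [han, han2, hg_sq]
    have hc₂' : (c₂ : ℂ) ≠ 0 := by exact_mod_cast hc₂.ne'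
    push_cast
    field_simp
  rw [hfactor, norm_mul, Complex.norm_real, Real.norm_of_nonneg hc₂.le]
  exact mul_le_of_le_one_right hc₂.le hbound

theorem stmt_11 (β : ℝ) (hβ0 : 0 ≤ β) (hβ1 : β < 1) (n : ℕ) (hn : 2 ≤ n)
    (μ : Measure (Set.Icc (0 : ℝ) (2 * Real.pi))) [IsProbabilityMeasure μ]
    (a : ℕ → ℂ)
    (han : a n = ((2 * (1 - β) / n : ℝ) : ℂ) *
      ∫ θ, Complex.exp (Complex.I * ((n : ℂ) - 1) * (θ : ℝ)) ∂μ)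
    (han2 : a (2 * n - 1) = ((2 * (1 - β) / (2 * (n : ℝ) - 1) : ℝ) : ℂ) *
      ∫ θ, Complex.exp (Complex.I * (2 * (n : ℂ) - 2) * (θ : ℝ)) ∂μ)
    (lam : ℝ) (hlam0 : 0 < lam) (hlam : lam ≤ 4 / (3 * (1 - β))) :
    ‖(lam : ℂ) * (a n) ^ 2 - a (2 * n - 1)‖ ≤
      2 * (1 - β) / (2 * (n : ℝ) - 1) :=
  stmt_11_general β hβ1 n hn μ a han han2 lam hlam0 hlam
end

section
/- Let f(z) = z + ∑_{n≥2} aₙ zⁿ satisfy ∑_{n≥2} n(2n−1)|aₙ| ≤ 1 (a sufficient condition for uniform convexity). Then for every λ > 0 and n ≥ 2, |λ aₙ² − a_{2n−1}| ≤ max{λ/(n(2n−1))², 1/((2n−1)(4n−3))}. -/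
/-!
The weighted coefficient sum dominates any two of its terms, so with `p = n(2n-1)` and
`q = (2n-1)(4n-3)` we get `p‖aₙ‖ + q‖a_{2n-1}‖ ≤ 1`; in particular `p‖aₙ‖ ≤ 1`, whence
`λ‖aₙ‖² = (λ/p²)(p‖aₙ‖)² ≤ (λ/p²)(p‖aₙ‖)`. By the triangle inequality
`‖λaₙ² - a_{2n-1}‖ ≤ (λ/p²)(p‖aₙ‖) + (1/q)(q‖a_{2n-1}‖) ≤ max (λ/p²) (1/q)`.
-/

lemma add_le_tsum_of_ne {f : ℕ → ℝ} (hf : Summable f) (hf0 : ∀ k, 0 ≤ f k) {i j : ℕ}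
    (hij : i ≠ j) : f i + f j ≤ ∑' k, f k := by
  simpa [Finset.sum_pair hij] using hf.sum_le_tsum {i, j} (fun k _ => hf0 k)

lemma mul_sq_add_le_max {lam p q x y : ℝ} (hp : 0 < p) (hq : 0 < q)
    (hx : 0 ≤ x) (hy : 0 ≤ y) (hxy : p * x + q * y ≤ 1) :
    lam * x ^ 2 + y ≤ max (lam / p ^ 2) (1 / q) := by
  set M := max (lam / p ^ 2) (1 / q)
  have hM0 : 0 ≤ M := (by positivity : 0 ≤ 1 / q).trans (le_max_right _ _)
  have hpx : p * x ≤ 1 := by nlinarith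
  have hx2 : lam * x ^ 2 ≤ M * (p * x) :=
    calc lam * x ^ 2 = lam / p ^ 2 * (p * x) ^ 2 := by field_simp
      _ ≤ M * (p * x) ^ 2 := by gcongr; exact le_max_left _ _
      _ ≤ M * (p * x) := by gcongr; nlinarith [mul_nonneg hp.le hx]
  have hy' : y ≤ M * (q * y) :=
    calc y = 1 / q * (q * y) := by field_simp
      _ ≤ M * (q * y) := by gcongr; exact le_max_right _ _
  calc lam * x ^ 2 + y ≤ M * (p * x + q * y) := by linarith
    _ ≤ M := mul_le_of_le_one_right hM0 hxy

lemma norm_ofReal_mul_sq_sub_le {lam : ℝ} (hlam : 0 ≤ lam) (z w : ℂ) :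
    ‖lam * z ^ 2 - w‖ ≤ lam * ‖z‖ ^ 2 + ‖w‖ := by
  calc ‖lam * z ^ 2 - w‖ ≤ ‖lam * z ^ 2‖ + ‖w‖ := norm_sub_le _ _
    _ = lam * ‖z‖ ^ 2 + ‖w‖ := by
      rw [norm_mul, norm_pow, Complex.norm_real, Real.norm_of_nonneg hlam]

lemma coeff_pair_le_one (a : ℕ → ℂ)
    (hsum : Summable (fun n : ℕ =>
      ((n : ℝ) + 2) * (2 * ((n : ℝ) + 2) - 1) * ‖a (n + 2)‖))
    (h : ∑' n : ℕ, ((n : ℝ) + 2) * (2 * ((n : ℝ) + 2) - 1) * ‖a (n + 2)‖ ≤ 1)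
    {n : ℕ} (hn : 2 ≤ n) :
    (n : ℝ) * (2 * n - 1) * ‖a n‖ + (2 * n - 1) * (4 * n - 3) * ‖a (2 * n - 1)‖ ≤ 1 := by
  have hterm : ∀ k : ℕ,
      0 ≤ ((k : ℝ) + 2) * (2 * ((k : ℝ) + 2) - 1) * ‖a (k + 2)‖ := fun k => by
    have : (0 : ℝ) ≤ k := k.cast_nonneg
    exact mul_nonneg (mul_nonneg (by positivity) (by linarith)) (norm_nonneg _)
  have hpair := (add_le_tsum_of_ne hsum hterm (by omega : n - 2 ≠ 2 * n - 3)).trans h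
  obtain ⟨m, rfl⟩ : ∃ m, n = m + 2 := ⟨n - 2, by omega⟩
  rw [show 2 * (m + 2) - 1 = 2 * m + 1 + 2 by omega]
  rw [show m + 2 - 2 = m by omega, show 2 * (m + 2) - 3 = 2 * m + 1 by omega] at hpair
  refine le_of_eq_of_le ?_ hpair
  push_cast
  ring

theorem stmt_13 (a : ℕ → ℂ)
    (hsum : Summable (fun n : ℕ =>
      ((n : ℝ) + 2) * (2 * ((n : ℝ) + 2) - 1) * ‖a (n + 2)‖))
    (h : ∑' n : ℕ, ((n : ℝ) + 2) * (2 * ((n : ℝ) + 2) - 1) * ‖a (n + 2)‖ ≤ 1)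
    (lam : ℝ) (hlam : 0 < lam) (n : ℕ) (hn : 2 ≤ n) :
    ‖lam * (a n) ^ 2 - a (2 * n - 1)‖ ≤
      max (lam / ((n : ℝ) * (2 * (n : ℝ) - 1)) ^ 2)
        (1 / ((2 * (n : ℝ) - 1) * (4 * (n : ℝ) - 3))) := by
  have hn' : (2 : ℝ) ≤ n := by exact_mod_cast hn
  refine (norm_ofReal_mul_sq_sub_le hlam.le _ _).trans ?_
  refine mul_sq_add_le_max (by nlinarith) (by nlinarith) (norm_nonneg _) (norm_nonneg _) ?_
  simpa only [mul_assoc] using coeff_pair_le_one a hsum h hn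
end
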